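/- Let C be an extended Choquet cone. The following are equivalent: (i) for any two idempotents w₁ ≤ w₂ of C with w₁ ≠ w₂ such that w₁ is compact relative to w₂, there exists x ∈ C with w₁ ≤ x ≤ w₂ such that x is not an idempotent; (ii) for every idempotent w ∈ C the set {x ∈ C : x ≤ w} is connected. Moreover, if these equivalent conditions hold, then the element x in (i) may always be chosen such that ε(x) = w₁. -/

import Mathlib

/-!
(i) ⇒ (ii): if `{x | x ≤ w}` splits into disjoint closed pieces `A ∋ 0` and `B`, take a minimal
idempotent `w₂` of `B` and a maximal idempotent `w₁ ≤ w₂` of `A`. No idempotent lies strictly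
between them, which already makes `w₁` compact relative to `w₂`, so (i) yields a non-idempotent
`x` between them. The closure of the ray `{t • x | t > 0}` is connected, lies below `w`, and
contains the infimum `ε(x)` and the supremum of the ray, which are idempotents between `w₁` and
`w₂`, hence equal to `w₁ ∈ A` and `w₂ ∈ B`: a contradiction.

(ii) ⇒ (i): compactness of `w₁` relative to `w₂` gives, by Zorn, an idempotent `v ≤ w₂` minimal
with `v ≰ w₁`. Again no idempotent lies strictly between `w₁ ⊓ v` and `v`, so if every point
of that interval were idempotent, `x ↦ x + (w₁ ⊓ v)` would split `{x | x ≤ v}` into two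
closed pieces. A non-idempotent `y` in the interval has `ε(y) = w₁ ⊓ v`, and `x = t • y + w₁`
for small `t` has `ε(x) = w₁`.
-/

open scoped ENNReal NNReal

/-- The positive real numbers, used as scalars for cones. -/
abbrev PosReal : Type := {t : ℝ // 0 < t}

/-- An extended Choquet cone: an algebraically ordered topological cone that is a lattice
under the algebraic order, with addition distributing over `⊓` and `⊔`, whose topology is
compact, Hausdorff and locally convex. -/
class ECCone (C : Type*) extends AddCommMonoid C, Lattice C, TopologicalSpace C where
  psmul : PosReal → C → C
  psmul_add : ∀ (t : PosReal) (x y : C), psmul t (x + y) = psmul t x + psmul t y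
  add_psmul : ∀ (s t : PosReal) (x : C), psmul (s + t) x = psmul s x + psmul t x
  psmul_mul : ∀ (s t : PosReal) (x : C), psmul s (psmul t x) = psmul (s * t) x
  one_psmul : ∀ x : C, psmul 1 x = x
  psmul_zero : ∀ t : PosReal, psmul t 0 = 0
  le_iff_exists_add : ∀ x y : C, x ≤ y ↔ ∃ z, x + z = y
  add_inf_distrib : ∀ x y z : C, x + (y ⊓ z) = (x + y) ⊓ (x + z)
  add_sup_distrib : ∀ x y z : C, x + (y ⊔ z) = (x + y) ⊔ (x + z)
  continuous_add' : Continuous fun p : C × C => p.1 + p.2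
  continuous_psmul : Continuous fun p : PosReal × C => psmul p.1 p.2
  compact : CompactSpace C
  t2 : T2Space C
  locally_convex : ∀ (x : C) (U : Set C), IsOpen U → x ∈ U →
    ∃ V : Set C, IsOpen V ∧ x ∈ V ∧ V ⊆ U ∧
      ∀ y ∈ V, ∀ z ∈ V, ∀ s t : PosReal, s.1 + t.1 = 1 → psmul s y + psmul t z ∈ V

/-- The way-below relation for functions into `[0,∞]`, relative to a set `S` of functions:
`f ≪ g` iff for every increasing sequence in `S` whose pointwise supremum dominates `g`,
some term of the sequence dominates `f`. -/
def FWayBelow {α : Type*} (S : Set (α → ℝ≥0∞)) (f g : α → ℝ≥0∞) : Prop :=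
  ∀ h : ℕ → α → ℝ≥0∞, (∀ n, h n ∈ S) → Monotone h → (∀ a, g a ≤ ⨆ n, h n a) → ∃ n, f ≤ h n

namespace ECCone

variable {C : Type*} [ECCone C]

/-- `w` is an idempotent: `2w = w`. -/
def IsIdem (w : C) : Prop := w + w = w

/-- `e` is the support idempotent of `x`: the maximum of `{z : x + z = x}`. -/
def IsSuppIdem (x e : C) : Prop := x + e = x ∧ ∀ z : C, x + z = x → z ≤ e

/-- `w₁ ≫ w₂` in the lattice of idempotents with the opposite order: whenever a nonempty
downward directed family of idempotents has an infimum `≤ w₂`, some member is `≤ w₁`. -/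
def IdemWayBelow (w₁ w₂ : C) : Prop :=
  ∀ D : Set C, D.Nonempty → (∀ v ∈ D, IsIdem v) → DirectedOn (· ≥ ·) D →
    ∀ m : C, IsGLB D m → m ≤ w₂ → ∃ v ∈ D, v ≤ w₁

/-- A compact idempotent: `w ≫ w`. -/
def IsCompactIdem (w : C) : Prop := IsIdem w ∧ IdemWayBelow w w

/-- `v` is compact relative to `w`: whenever a nonempty downward directed family of
idempotents has an infimum `≤ v`, some member `u` satisfies `u ⊓ w ≤ v`. -/
def CompactRelTo (v w : C) : Prop :=
  ∀ D : Set C, D.Nonempty → (∀ u ∈ D, IsIdem u) → DirectedOn (· ≥ ·) D →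
    ∀ m : C, IsGLB D m → m ≤ v → ∃ u ∈ D, u ⊓ w ≤ v

/-- `C` has an abundance of compact idempotents: every idempotent is an infimum
of compact idempotents. -/
def HasAbundantCompactIdem (C : Type*) [ECCone C] : Prop :=
  ∀ w : C, IsIdem w → ∃ D : Set C, (∀ v ∈ D, IsCompactIdem v) ∧ IsGLB D w

/-- `C` is strongly connected: `{x : x ≤ w}` is connected for every idempotent `w`. -/
def StronglyConnected (C : Type*) [ECCone C] : Prop :=
  ∀ w : C, IsIdem w → IsConnected {x : C | x ≤ w}

/-- A linear function on a cone: additive, homogeneous, sending `0` to `0`. -/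
def IsLinFun (f : C → ℝ≥0∞) : Prop :=
  f 0 = 0 ∧ (∀ x y : C, f (x + y) = f x + f y) ∧
    ∀ (t : PosReal) (x : C), f (psmul t x) = ENNReal.ofReal t.1 * f x

/-- Membership in `Lsc(C)`: linear and lower semicontinuous. -/
def MemLsc (f : C → ℝ≥0∞) : Prop := IsLinFun f ∧ LowerSemicontinuous f

/-- Membership in `Lsc_σ(C)`: in `Lsc(C)` and `f⁻¹((a,∞])` is σ-compact for all `a < ∞`. -/
def MemLscSigma (f : C → ℝ≥0∞) : Prop :=
  MemLsc f ∧ ∀ a : ℝ≥0, IsSigmaCompact {x : C | (a : ℝ≥0∞) < f x}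

/-- Membership in `A(C)`: linear and continuous. -/
def MemA (f : C → ℝ≥0∞) : Prop := IsLinFun f ∧ Continuous f

/-- `w = supp f`, the supremum of `{x : f x = 0}`. -/
def IsSupp (f : C → ℝ≥0∞) (w : C) : Prop := IsLUB {x : C | f x = 0} w

/-- The relation `f ◁ g`: `f ≤ (1-ε)g` for some `ε > 0`, and `f` is continuous at every
point where `g` is finite. -/
def Lhd (f g : C → ℝ≥0∞) : Prop :=
  (∃ ε : ℝ, 0 < ε ∧ ∀ x, f x ≤ ENNReal.ofReal (1 - ε) * g x) ∧
    ∀ x : C, g x ≠ ⊤ → ContinuousAt f x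

end ECCone

section CompactOrder

open Set

variable {α : Type*} [TopologicalSpace α] [PartialOrder α] [CompactSpace α]
  [OrderClosedTopology α] {s : Set α}

theorem DirectedOn.exists_isGLB_mem_closure (hne : s.Nonempty) (hdir : DirectedOn (· ≥ ·) s) :
    ∃ m, IsGLB s m ∧ m ∈ closure s := by
  have : Nonempty s := hne.to_subtype
  have hdir' : Directed (· ⊇ ·) fun a : s => closure {y ∈ s | y ≤ a} := by
    rintro ⟨a, ha⟩ ⟨b, hb⟩
    obtain ⟨c, hc, hca, hcb⟩ := hdir a ha b hb
    exact ⟨⟨c, hc⟩, closure_mono fun y hy => ⟨hy.1, hy.2.trans hca⟩,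
      closure_mono fun y hy => ⟨hy.1, hy.2.trans hcb⟩⟩
  obtain ⟨m, hm⟩ := IsCompact.nonempty_iInter_of_directed_nonempty_isCompact_isClosed _ hdir'
    (fun a => ⟨a, subset_closure ⟨a.2, le_rfl⟩⟩) (fun _ => isClosed_closure.isCompact)
    (fun _ => isClosed_closure)
  rw [mem_iInter] at hm
  obtain ⟨a, ha⟩ := hne
  refine ⟨m, ⟨fun b hb => ?_, fun c hc => ?_⟩, closure_mono (fun y hy => hy.1) (hm ⟨a, ha⟩)⟩
  · exact closure_minimal (fun y hy => hy.2) isClosed_Iic (hm ⟨b, hb⟩)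
  · exact closure_minimal (fun y hy => hc hy.1) isClosed_Ici (hm ⟨a, ha⟩)

theorem DirectedOn.exists_isLUB_mem_closure (hne : s.Nonempty) (hdir : DirectedOn (· ≤ ·) s) :
    ∃ m, IsLUB s m ∧ m ∈ closure s :=
  have : CompactSpace αᵒᵈ := ‹CompactSpace α›
  DirectedOn.exists_isGLB_mem_closure (α := αᵒᵈ) hne hdir

theorem exists_maximal_of_isLUB_mem (hne : s.Nonempty)
    (h : ∀ c ⊆ s, c.Nonempty → IsChain (· ≤ ·) c → ∀ m, IsLUB c m → m ∈ closure c → m ∈ s) :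
    ∃ m, Maximal (· ∈ s) m := by
  obtain ⟨a, ha⟩ := hne
  refine (zorn_le_nonempty₀ s (fun c hcs hc y hy => ?_) a ha).imp fun _ hm => hm.2
  obtain ⟨m, hlub, hcl⟩ := hc.directedOn.exists_isLUB_mem_closure ⟨y, hy⟩
  exact ⟨m, h c hcs ⟨y, hy⟩ hc m hlub hcl, hlub.1⟩

theorem exists_minimal_of_isGLB_mem (hne : s.Nonempty)
    (h : ∀ c ⊆ s, c.Nonempty → IsChain (· ≤ ·) c → ∀ m, IsGLB c m → m ∈ closure c → m ∈ s) :
    ∃ m, Minimal (· ∈ s) m :=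
  have : CompactSpace αᵒᵈ := ‹CompactSpace α›
  exists_maximal_of_isLUB_mem (α := αᵒᵈ) hne fun c hcs hcne hc => h c hcs hcne hc.symm

theorem IsClosed.exists_maximal (hs : IsClosed s) (hne : s.Nonempty) : ∃ m, Maximal (· ∈ s) m :=
  exists_maximal_of_isLUB_mem hne fun _ hcs _ _ _ _ hm => hs.closure_subset_iff.2 hcs hm

theorem IsClosed.exists_minimal (hs : IsClosed s) (hne : s.Nonempty) : ∃ m, Minimal (· ∈ s) m :=
  exists_minimal_of_isGLB_mem hne fun _ hcs _ _ _ _ hm => hs.closure_subset_iff.2 hcs hm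

end CompactOrder

namespace ECCone

open Set

variable {C : Type*} [ECCone C]

instance : CompactSpace C := compact

instance : T2Space C := t2

instance : ContinuousAdd C := ⟨continuous_add'⟩

instance : IsOrderedAddMonoid C where
  add_le_add_left a b h c := by
    obtain ⟨z, rfl⟩ := (ECCone.le_iff_exists_add a b).1 h
    exact (ECCone.le_iff_exists_add _ _).2 ⟨z, add_right_comm a c z⟩

instance : CanonicallyOrderedAdd C where
  exists_add_of_le h := ((ECCone.le_iff_exists_add _ _).1 h).imp fun _ h => h.symm
  le_add_self a b := (ECCone.le_iff_exists_add _ _).2 ⟨b, add_comm a b⟩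
  le_self_add _ b := (ECCone.le_iff_exists_add _ _).2 ⟨b, rfl⟩

instance : OrderClosedTopology C where
  isClosed_le' := by
    have : {p : C × C | p.1 ≤ p.2} = range fun q : C × C => (q.1, q.1 + q.2) := by
      ext ⟨a, b⟩
      refine (ECCone.le_iff_exists_add a b).trans ⟨?_, ?_⟩
      · rintro ⟨z, rfl⟩
        exact ⟨(a, z), rfl⟩
      · rintro ⟨⟨a, z⟩, h⟩
        obtain ⟨rfl, rfl⟩ := Prod.mk.inj h
        exact ⟨z, rfl⟩
    rw [this]
    exact (isCompact_range (by fun_prop)).isClosed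

lemma psmul_le_psmul_left (t : PosReal) {x y : C} (h : x ≤ y) : psmul t x ≤ psmul t y := by
  obtain ⟨z, rfl⟩ := exists_add_of_le h
  rw [psmul_add]
  exact le_self_add

lemma psmul_le_psmul_right {s t : PosReal} (h : s ≤ t) (x : C) : psmul s x ≤ psmul t x := by
  obtain rfl | h := h.eq_or_lt
  · rfl
  · have : t = s + ⟨t.1 - s.1, sub_pos.2 h⟩ := Subtype.ext (by simp)
    rw [this, add_psmul]
    exact le_self_add

lemma psmul_inv_psmul (t : PosReal) (x : C) : psmul t⁻¹ (psmul t x) = x := by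
  rw [psmul_mul, inv_mul_cancel, one_psmul]

noncomputable def psmulOrderIso (t : PosReal) : C ≃o C where
  toFun := psmul t
  invFun := psmul t⁻¹
  left_inv := psmul_inv_psmul t
  right_inv x := by simpa using psmul_inv_psmul t⁻¹ x
  map_rel_iff' := ⟨fun h => by simpa [psmul_inv_psmul] using psmul_le_psmul_left t⁻¹ h,
    psmul_le_psmul_left t⟩

lemma add_psmul_natSucc_eq {x z : C} (h : x + z = x) (n : ℕ) :
    x + psmul ⟨n + 1, n.cast_add_one_pos⟩ z = x := by
  induction n with
  | zero =>
    rw [show (⟨((0 : ℕ) : ℝ) + 1, Nat.cast_add_one_pos 0⟩ : PosReal) = 1 from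
      Subtype.ext (by simp), one_psmul]
    exact h
  | succ n ih =>
    have : (⟨(n + 1 : ℕ) + 1, by positivity⟩ : PosReal) = ⟨n + 1, n.cast_add_one_pos⟩ + 1 :=
      Subtype.ext (by push_cast; rfl)
    rw [this, add_psmul, one_psmul, ← add_assoc, ih, h]

lemma le_psmul_of_add_eq {x z : C} (h : x + z = x) (t : PosReal) : z ≤ psmul t x := by
  obtain ⟨n, hn⟩ := exists_nat_gt t.1⁻¹
  set N : PosReal := ⟨n + 1, n.cast_add_one_pos⟩
  have htN : (1 : PosReal) ≤ t * N := by
    change (1 : ℝ) ≤ t.1 * (n + 1)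
    rw [inv_lt_iff_one_lt_mul₀ t.2] at hn
    nlinarith [t.2]
  calc z = psmul 1 z := (one_psmul z).symm
    _ ≤ psmul (t * N) z := psmul_le_psmul_right htN z
    _ = psmul t (psmul N z) := (psmul_mul t N z).symm
    _ ≤ psmul t x := psmul_le_psmul_left t (le_add_self.trans_eq (add_psmul_natSucc_eq h n))

lemma le_of_forall_le_psmul_one_add {x y : C} (h : ∀ t : PosReal, y ≤ psmul (1 + t) x) :
    y ≤ x := by
  let f : ℝ → C := fun s => psmul ⟨1 + max s 0, by positivity⟩ x
  have hf : Continuous f :=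
    continuous_psmul.comp ((Continuous.subtype_mk (by fun_prop) _).prodMk continuous_const)
  have hpos : Ioi 0 ⊆ f ⁻¹' Ici y := fun s hs => by
    have : (⟨1 + max s 0, by positivity⟩ : PosReal) = 1 + ⟨s, hs⟩ :=
      Subtype.ext (show 1 + max s 0 = 1 + s by rw [max_eq_left (mem_Ioi.1 hs).le])
    simpa only [mem_preimage, mem_Ici, f, this] using h ⟨s, hs⟩
  have h0 : (0 : ℝ) ∈ f ⁻¹' Ici y := (isClosed_Ici.preimage hf).closure_subset_iff.2 hpos
    (by rw [closure_Ioi]; exact mem_Ici.2 le_rfl)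
  have hf0 : f 0 = x := by
    simp only [f, max_self, add_zero]
    exact one_psmul x
  exact hf0 ▸ h0

lemma isClosed_setOf_isIdem : IsClosed {w : C | IsIdem w} :=
  isClosed_eq (by fun_prop) continuous_id

namespace IsIdem

variable {v w x : C}

lemma add (hv : IsIdem v) (hw : IsIdem w) : IsIdem (v + w) := by
  rw [IsIdem, add_add_add_comm, hv, hw]

lemma add_eq_right_of_le (hw : IsIdem w) (h : x ≤ w) : x + w = w :=
  le_antisymm ((add_le_add_left h w).trans_eq hw) le_add_self

lemma add_eq_left_of_le (hw : IsIdem w) (h : w ≤ x) : x + w = x := by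
  obtain ⟨z, rfl⟩ := exists_add_of_le h
  rw [add_right_comm, hw]

lemma inf (hv : IsIdem v) (hw : IsIdem w) : IsIdem (v ⊓ w) := by
  rw [IsIdem, add_inf_distrib, hv.add_eq_right_of_le inf_le_left,
    hw.add_eq_right_of_le inf_le_right]

lemma inf_add (hw : IsIdem w) (a b : C) : w ⊓ (a + b) = w ⊓ a + w ⊓ b := by
  calc w ⊓ (a + b) = w ⊓ ((w + b) ⊓ (a + b)) := by
        rw [← inf_assoc, inf_eq_left.2 (le_self_add : w ≤ w + b)]
    _ = (w ⊓ a + w) ⊓ (w ⊓ a + b) := by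
        rw [hw.add_eq_right_of_le inf_le_left, add_comm (w ⊓ a), add_inf_distrib, add_comm b w,
          add_comm b a]
    _ = w ⊓ a + w ⊓ b := (add_inf_distrib _ _ _).symm

lemma psmul (hw : IsIdem w) (t : PosReal) : IsIdem (psmul t w) := by
  rw [IsIdem, ← psmul_add, hw]

lemma psmul_eq (hw : IsIdem w) (t : PosReal) : ECCone.psmul t w = w := by
  refine le_antisymm ?_ (le_psmul_of_add_eq hw t)
  simpa only [psmul_inv_psmul] using le_psmul_of_add_eq (hw.psmul t) t⁻¹

end IsIdem

def orbit (x : C) : Set C := range fun t : PosReal => psmul t x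

lemma mem_orbit_self (x : C) : x ∈ orbit x := ⟨1, one_psmul x⟩

lemma isChain_orbit (x : C) : IsChain (· ≤ ·) (orbit x) :=
  Monotone.isChain_range fun _ _ h => psmul_le_psmul_right h x

lemma isConnected_closure_orbit (x : C) : IsConnected (closure (orbit x)) :=
  have : ConnectedSpace PosReal := Subtype.connectedSpace (isConnected_Ioi (a := (0 : ℝ)))
  (isConnected_range (continuous_psmul.comp (continuous_id.prodMk continuous_const))).closure

lemma image_psmul_orbit (s : PosReal) (x : C) : psmul s '' orbit x = orbit x := by
  ext y
  constructor
  · rintro ⟨_, ⟨t, rfl⟩, rfl⟩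
    exact ⟨s * t, (psmul_mul s t x).symm⟩
  · rintro ⟨t, rfl⟩
    exact ⟨psmul (s⁻¹ * t) x, ⟨_, rfl⟩, by rw [psmul_mul, mul_inv_cancel_left]⟩

lemma closure_orbit_subset_Iic {w x : C} (hw : IsIdem w) (h : x ≤ w) :
    closure (orbit x) ⊆ Iic w :=
  closure_minimal (by rintro _ ⟨t, rfl⟩; exact (psmul_le_psmul_left t h).trans_eq (hw.psmul_eq t))
    isClosed_Iic

lemma exists_isSuppIdem_mem_closure_orbit (x : C) :
    ∃ e, IsSuppIdem x e ∧ e ∈ closure (orbit x) := by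
  have hdir : DirectedOn (· ≥ ·) (orbit x) := IsChain.directedOn (isChain_orbit x).symm
  obtain ⟨e, hglb, hcl⟩ := hdir.exists_isGLB_mem_closure ⟨x, mem_orbit_self x⟩
  refine ⟨e, ⟨le_antisymm ?_ le_self_add, fun z hz => hglb.2 ?_⟩, hcl⟩
  · refine le_of_forall_le_psmul_one_add fun t => ?_
    rw [add_psmul, one_psmul]
    exact add_le_add_right (hglb.1 ⟨t, rfl⟩) x
  · rintro _ ⟨t, rfl⟩
    exact le_psmul_of_add_eq hz t

-- The supremum of the orbit is fixed by every scaling, which permutes the orbit.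
lemma exists_isIdem_le_mem_closure_orbit (x : C) :
    ∃ u, IsIdem u ∧ x ≤ u ∧ u ∈ closure (orbit x) := by
  obtain ⟨u, hlub, hcl⟩ := (isChain_orbit x).directedOn.exists_isLUB_mem_closure
    ⟨x, mem_orbit_self x⟩
  have h2 : psmul (1 + 1) u = u := by
    have := (psmulOrderIso (1 + 1)).isLUB_image'.2 hlub
    change IsLUB (psmul (1 + 1) '' orbit x) (psmul (1 + 1) u) at this
    rw [image_psmul_orbit] at this
    exact this.unique hlub
  refine ⟨u, ?_, hlub.1 (mem_orbit_self x), hcl⟩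
  exact (show u + u = psmul (1 + 1) u by rw [add_psmul, one_psmul]).trans h2

namespace IsSuppIdem

variable {e w x : C}

lemma le (h : IsSuppIdem x e) : e ≤ x := le_add_self.trans_eq h.1

lemma isIdem (h : IsSuppIdem x e) : IsIdem e :=
  le_antisymm (h.2 _ (by rw [← add_assoc, h.1, h.1])) le_self_add

lemma eq_of_isIdem (h : IsSuppIdem x e) (hx : IsIdem x) : e = x := le_antisymm h.le (h.2 x hx)

lemma le_of_isIdem (h : IsSuppIdem x e) (hw : IsIdem w) (hwx : w ≤ x) : w ≤ e :=
  h.2 w (hw.add_eq_left_of_le hwx)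

end IsSuppIdem

def IdemGap (w₁ w₂ : C) : Prop := ∀ u, IsIdem u → w₁ ≤ u → u ≤ w₂ → u = w₁ ∨ u = w₂

namespace IdemGap

variable {w₁ w₂ x : C}

lemma mem_closure_orbit (hgap : IdemGap w₁ w₂) (h₁ : IsIdem w₁) (h₂ : IsIdem w₂)
    (hx₁ : w₁ ≤ x) (hx₂ : x ≤ w₂) (hx : ¬IsIdem x) :
    w₁ ∈ closure (orbit x) ∧ w₂ ∈ closure (orbit x) := by
  obtain ⟨e, he, hecl⟩ := exists_isSuppIdem_mem_closure_orbit x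
  obtain ⟨u, hu, hxu, hucl⟩ := exists_isIdem_le_mem_closure_orbit x
  refine ⟨?_, ?_⟩
  · obtain rfl | rfl := hgap e he.isIdem (he.le_of_isIdem h₁ hx₁) (he.le.trans hx₂)
    · exact hecl
    · exact absurd (le_antisymm hx₂ he.le ▸ he.isIdem) hx
  · obtain rfl | rfl := hgap u hu (hx₁.trans hxu) (closure_orbit_subset_Iic h₂ hx₂ hucl)
    · exact absurd (le_antisymm hxu hx₁ ▸ hu) hx
    · exact hucl

-- If every `(u ⊓ w₂) + w₁` with `u ∈ D` equals `w₂`, so does the limit `m' + w₁` of the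
-- directed family `{u ⊓ w₂}`, although `m' ≤ inf D ≤ w₁`.
lemma compactRelTo (hgap : IdemGap w₁ w₂) (h₁ : IsIdem w₁) (h₂ : IsIdem w₂) (hle : w₁ ≤ w₂) :
    CompactRelTo w₁ w₂ := by
  intro D hDne hDidem hDdir m hm hmw₁
  by_contra! hD
  have hsum : ∀ u ∈ D, u ⊓ w₂ + w₁ = w₂ := fun u hu =>
    (hgap _ (((hDidem u hu).inf h₂).add h₁) le_add_self
      ((add_le_add inf_le_right hle).trans_eq h₂)).resolve_left
      fun h => hD u hu (le_self_add.trans_eq h)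
  have hD'dir : DirectedOn (· ≥ ·) ((· ⊓ w₂) '' D) := by
    rintro _ ⟨u, hu, rfl⟩ _ ⟨v, hv, rfl⟩
    obtain ⟨z, hz, hzu, hzv⟩ := hDdir u hu v hv
    exact ⟨z ⊓ w₂, ⟨z, hz, rfl⟩, inf_le_inf_right w₂ hzu, inf_le_inf_right w₂ hzv⟩
  obtain ⟨m', hm', hm'cl⟩ := hD'dir.exists_isGLB_mem_closure (hDne.image _)
  have hm'm : m' ≤ m := hm.2 fun u hu => (hm'.1 ⟨u, hu, rfl⟩).trans inf_le_left
  have hm'sum : m' + w₁ = w₂ :=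
    (isClosed_eq (continuous_add_const w₁) continuous_const).closure_subset_iff.2
      (by rintro _ ⟨u, hu, rfl⟩; exact hsum u hu) hm'cl
  have hw₂w₁ : w₂ ≤ w₁ := (h₁.add_eq_right_of_le (hm'm.trans hmw₁)).symm.trans hm'sum |>.ge
  obtain ⟨u, hu⟩ := hDne
  exact hD u hu (inf_le_right.trans hw₂w₁)

lemma exists_not_isIdem (hgap : IdemGap w₁ w₂) (h₁ : IsIdem w₁) (h₂ : IsIdem w₂) (hle : w₁ ≤ w₂)
    (hne : w₁ ≠ w₂) (hconn : IsPreconnected (Iic w₂)) : ∃ y, w₁ ≤ y ∧ y ≤ w₂ ∧ ¬IsIdem y := by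
  by_contra! hall
  have hsplit : Iic w₂ ⊆ {x | x + w₁ = w₁} ∪ {x | x + w₁ = w₂} := fun x hx =>
    hgap _ (hall _ le_add_self ((add_le_add hx hle).trans_eq h₂)) le_add_self
      ((add_le_add hx hle).trans_eq h₂)
  rcases (isPreconnected_iff_subset_of_fully_disjoint_closed isClosed_Iic).1 hconn _ _
    (isClosed_eq (continuous_add_const w₁) continuous_const)
    (isClosed_eq (continuous_add_const w₁) continuous_const) hsplit
    (disjoint_left.2 fun x h h' => hne (h.symm.trans h')) with h | h
  · exact hne ((h (mem_Iic.2 le_rfl)).symm.trans (h₁.add_eq_left_of_le hle))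
  · exact hne ((zero_add w₁).symm.trans (h zero_le))

end IdemGap

section Split

variable {w : C} {A B : Set C}

lemma closure_orbit_subset_or_subset (hw : IsIdem w) {x : C} (hx : x ≤ w) (hA : IsClosed A)
    (hB : IsClosed B) (hAB : Disjoint A B) (hcover : Iic w ⊆ A ∪ B) :
    closure (orbit x) ⊆ A ∨ closure (orbit x) ⊆ B :=
  (isPreconnected_iff_subset_of_fully_disjoint_closed isClosed_closure).1
    (isConnected_closure_orbit x).2 A B hA hB ((closure_orbit_subset_Iic hw hx).trans hcover) hAB

lemma exists_idemGap_of_split (hw : IsIdem w) (hA : IsClosed A) (hB : IsClosed B)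
    (hAB : Disjoint A B) (hcover : Iic w ⊆ A ∪ B) (h0 : 0 ∈ A) {b : C} (hb : b ≤ w)
    (hbB : b ∈ B) :
    ∃ w₁ ∈ A, ∃ w₂ ∈ B, IsIdem w₁ ∧ IsIdem w₂ ∧ w₁ ≤ w₂ ∧ w₂ ≤ w ∧ IdemGap w₁ w₂ := by
  obtain ⟨e, he, hecl⟩ := exists_isSuppIdem_mem_closure_orbit b
  have heB : e ∈ B := by
    rcases closure_orbit_subset_or_subset hw hb hA hB hAB hcover with h | h
    · exact absurd hbB (hAB.notMem_of_mem_left (h (subset_closure (mem_orbit_self b))))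
    · exact h hecl
  obtain ⟨w₂, hw₂⟩ := ((isClosed_setOf_isIdem.inter isClosed_Iic).inter hB).exists_minimal
    ⟨e, ⟨he.isIdem, he.le.trans hb⟩, heB⟩
  obtain ⟨⟨h₂, hw₂w⟩, hw₂B⟩ := hw₂.prop
  obtain ⟨w₁, hw₁⟩ := ((isClosed_setOf_isIdem.inter isClosed_Iic).inter hA).exists_maximal
    ⟨0, ⟨add_zero 0, zero_le⟩, h0⟩
  obtain ⟨⟨h₁, hle⟩, hw₁A⟩ := hw₁.prop
  refine ⟨w₁, hw₁A, w₂, hw₂B, h₁, h₂, hle, hw₂w, fun u hu hu₁ hu₂ => ?_⟩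
  rcases hcover (hu₂.trans hw₂w) with huA | huB
  · exact .inl (hw₁.eq_of_ge ⟨⟨hu, hu₂⟩, huA⟩ hu₁)
  · exact .inr (hw₂.eq_of_le ⟨⟨hu, hu₂.trans hw₂w⟩, huB⟩ hu₂)

end Split

theorem isConnected_Iic_of_exists_not_isIdem
    (hi : ∀ w₁ w₂ : C, IsIdem w₁ → IsIdem w₂ → w₁ ≤ w₂ → w₁ ≠ w₂ → CompactRelTo w₁ w₂ →
      ∃ x, w₁ ≤ x ∧ x ≤ w₂ ∧ ¬IsIdem x)
    {w : C} (hw : IsIdem w) : IsConnected (Iic w) := by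
  suffices h : ∀ A B : Set C, IsClosed A → IsClosed B → Iic w ⊆ A ∪ B → Disjoint A B → 0 ∈ A →
      Iic w ⊆ A by
    refine ⟨⟨0, zero_le⟩, (isPreconnected_iff_subset_of_fully_disjoint_closed isClosed_Iic).2
      fun A B hA hB hcover hAB => ?_⟩
    rcases hcover (zero_le : (0 : C) ≤ w) with h0 | h0
    · exact .inl (h A B hA hB hcover hAB h0)
    · exact .inr (h B A hB hA (union_comm A B ▸ hcover) hAB.symm h0)
  intro A B hA hB hcover hAB h0 b hb
  by_contra hbA
  obtain ⟨w₁, hw₁A, w₂, hw₂B, h₁, h₂, hle, hw₂w, hgap⟩ :=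
    exists_idemGap_of_split hw hA hB hAB hcover h0 hb ((hcover hb).resolve_left hbA)
  obtain ⟨x, hx₁, hx₂, hx⟩ :=
    hi w₁ w₂ h₁ h₂ hle (hAB.ne_of_mem hw₁A hw₂B) (hgap.compactRelTo h₁ h₂ hle)
  obtain ⟨hw₁x, hw₂x⟩ := hgap.mem_closure_orbit h₁ h₂ hx₁ hx₂ hx
  rcases closure_orbit_subset_or_subset hw (hx₂.trans hw₂w) hA hB hAB hcover with h | h
  · exact hAB.ne_of_mem (h hw₂x) hw₂B rfl
  · exact hAB.ne_of_mem hw₁A (h hw₁x) rfl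

section MinimalIdem

variable {w₁ w₂ v : C}

lemma exists_minimal_isIdem_not_le (h₂ : IsIdem w₂) (hcr : CompactRelTo w₁ w₂)
    (hnle : ¬w₂ ≤ w₁) : ∃ v, Minimal (· ∈ {u | IsIdem u ∧ u ≤ w₂ ∧ ¬u ≤ w₁}) v := by
  refine exists_minimal_of_isGLB_mem ⟨w₂, h₂, le_rfl, hnle⟩
    fun c hc ⟨a, ha⟩ hchain m hm hmcl => ⟨?_, (hm.1 ha).trans (hc ha).2.1, fun hmw₁ => ?_⟩
  · exact isClosed_setOf_isIdem.closure_subset_iff.2 (fun u hu => (hc hu).1) hmcl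
  · obtain ⟨u, hu, hle⟩ := hcr c ⟨a, ha⟩ (fun u hu => (hc hu).1)
      (IsChain.directedOn hchain.symm) m hm hmw₁
    exact (hc hu).2.2 (by rwa [inf_eq_left.2 (hc hu).2.1] at hle)

lemma idemGap_inf_of_minimal (hv : Minimal (· ∈ {u | IsIdem u ∧ u ≤ w₂ ∧ ¬u ≤ w₁}) v) :
    IdemGap (w₁ ⊓ v) v := fun u hu hu₁ hu₂ => by
  by_cases huw₁ : u ≤ w₁
  · exact .inl (le_antisymm (le_inf huw₁ hu₂) hu₁)
  · exact .inr (hv.eq_of_le ⟨hu, hu₂.trans hv.prop.2.1, huw₁⟩ hu₂)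

lemma IsSuppIdem.eq_of_minimal (hv : Minimal (· ∈ {u | IsIdem u ∧ u ≤ w₂ ∧ ¬u ≤ w₁}) v)
    (h₁ : IsIdem w₁) {x e : C} (he : IsSuppIdem x e) (hx₁ : w₁ ≤ x) (hxv : x ≤ v + w₁)
    (hvx : ¬v ≤ x) : e = w₁ := by
  have hev : e ⊓ v ≤ w₁ := by
    by_contra h
    have := hv.eq_of_le ⟨he.isIdem.inf hv.prop.1, inf_le_right.trans hv.prop.2.1, h⟩ inf_le_right
    exact hvx (this ▸ inf_le_left.trans he.le)
  refine le_antisymm ?_ (he.le_of_isIdem h₁ hx₁)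
  calc e = e ⊓ (v + w₁) := (inf_eq_left.2 (he.le.trans hxv)).symm
    _ = e ⊓ v + e ⊓ w₁ := he.isIdem.inf_add v w₁
    _ ≤ w₁ + w₁ := add_le_add hev inf_le_right
    _ = w₁ := h₁

end MinimalIdem

theorem exists_not_isIdem_suppIdem_eq (hconn : ∀ w : C, IsIdem w → IsConnected (Iic w))
    {ε : C → C} (hε : ∀ x, IsSuppIdem x (ε x)) {w₁ w₂ : C} (h₁ : IsIdem w₁) (h₂ : IsIdem w₂)
    (hle : w₁ ≤ w₂) (hne : w₁ ≠ w₂) (hcr : CompactRelTo w₁ w₂) :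
    ∃ x, w₁ ≤ x ∧ x ≤ w₂ ∧ ¬IsIdem x ∧ ε x = w₁ := by
  obtain ⟨v, hv⟩ := exists_minimal_isIdem_not_le h₂ hcr fun h => hne (le_antisymm hle h)
  obtain ⟨hvidem, hvw₂, hvw₁⟩ := hv.prop
  have hw : IsIdem (w₁ ⊓ v) := h₁.inf hvidem
  have hgap := idemGap_inf_of_minimal hv
  obtain ⟨y, hy₁, hy₂, hy⟩ := hgap.exists_not_isIdem hw hvidem inf_le_right
    (fun h => hvw₁ (h ▸ inf_le_left)) (hconn v hvidem).2
  obtain ⟨t, ht⟩ : ∃ t, ¬v ≤ psmul t y + w₁ := by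
    by_contra! hall
    have : v ≤ w₁ ⊓ v + w₁ :=
      (isClosed_Ici.preimage (continuous_add_const w₁)).closure_subset_iff.2
        (by rintro _ ⟨t, rfl⟩; exact hall t) (hgap.mem_closure_orbit hw hvidem hy₁ hy₂ hy).1
    exact hvw₁ (this.trans_eq (h₁.add_eq_right_of_le inf_le_left))
  have hty : psmul t y ≤ v := (psmul_le_psmul_left t hy₂).trans_eq (hvidem.psmul_eq t)
  have hεx := (hε (psmul t y + w₁)).eq_of_minimal hv h₁ le_add_self (add_le_add_left hty w₁) ht
  refine ⟨_, le_add_self, (add_le_add (hty.trans hvw₂) hle).trans_eq h₂, fun hx => hy ?_, hεx⟩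
  have htyw : psmul t y ≤ w₁ ⊓ v :=
    le_inf (le_self_add.trans_eq (((hε _).eq_of_isIdem hx).symm.trans hεx)) hty
  have hyw : y ≤ w₁ ⊓ v := by
    simpa only [psmul_inv_psmul, hw.psmul_eq] using psmul_le_psmul_left t⁻¹ htyw
  exact le_antisymm hyw hy₁ ▸ hw

end ECCone

/-- In an extended Choquet cone the following are equivalent:
(i) between any two distinct comparable idempotents `w₁ ≤ w₂` with `w₁` compact relative
to `w₂` there is a non-idempotent element; (ii) `{x : x ≤ w}` is connected for every
idempotent `w`. Moreover, in that case the element in (i) can be chosen with `ε(x) = w₁`. -/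
theorem stmt_5 {C : Type*} [ECCone C] (ε : C → C) (hε : ∀ x, ECCone.IsSuppIdem x (ε x)) :
    ((∀ w₁ w₂ : C, ECCone.IsIdem w₁ → ECCone.IsIdem w₂ → w₁ ≤ w₂ → w₁ ≠ w₂ →
        ECCone.CompactRelTo w₁ w₂ → ∃ x : C, w₁ ≤ x ∧ x ≤ w₂ ∧ ¬ ECCone.IsIdem x) ↔
      (∀ w : C, ECCone.IsIdem w → IsConnected {x : C | x ≤ w})) ∧
    ((∀ w : C, ECCone.IsIdem w → IsConnected {x : C | x ≤ w}) →
      ∀ w₁ w₂ : C, ECCone.IsIdem w₁ → ECCone.IsIdem w₂ → w₁ ≤ w₂ → w₁ ≠ w₂ →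
        ECCone.CompactRelTo w₁ w₂ →
          ∃ x : C, w₁ ≤ x ∧ x ≤ w₂ ∧ ¬ ECCone.IsIdem x ∧ ε x = w₁) := by
  have strong := fun hconn w₁ w₂ =>
    ECCone.exists_not_isIdem_suppIdem_eq (w₁ := w₁) (w₂ := w₂) hconn hε
  refine ⟨⟨fun hi _ => ECCone.isConnected_Iic_of_exists_not_isIdem hi,
    fun hconn w₁ w₂ h₁ h₂ hle hne hcr => ?_⟩, strong⟩
  obtain ⟨x, hx₁, hx₂, hx, -⟩ := strong hconn w₁ w₂ h₁ h₂ hle hne hcr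
  exact ⟨x, hx₁, hx₂, hx⟩
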